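/- arXiv:1401.4161 — 4 statements merged into one kernel-verified Lean document; each statement's English description precedes it below -/
import Mathlib

section
/- For every real N_S > 0 and every integer n ≥ 1, the number of n-tuples (a₁,…,aₙ) of natural numbers with a₁ + ⋯ + aₙ ≤ ⌈n·N_S⌉ is at most e·(1 + 1/N_S)·2^(n·g(N_S)). -/
/-- `g(x) = (x+1)·log₂(x+1) − x·log₂(x)`, the entropy of a thermal state of mean photon
number `x`. -/
noncomputable def g (x : ℝ) : ℝ := (x + 1) * Real.logb 2 (x + 1) - x * Real.logb 2 x

/-!
A Chernoff bound. For `0 ≤ q < 1`, every tuple with `∑ aᵢ ≤ L` has weight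
`q ^ ∑ aᵢ ≥ q ^ L`, and the total weight of all tuples is at most `(1 - q)⁻ⁿ`; hence there are
at most `(1 - q)⁻ⁿ q⁻ᴸ` of them. With `q = x / (x + 1)` this is `(x + 1)ⁿ (1 + 1/x)ᴸ`, while
`2 ^ g x = (x + 1) (1 + 1/x) ^ x`. Since `L = ⌈n x⌉ ≤ n x + 1`, the bound is
`(1 + 1/x) · 2 ^ (n g x)`, and `e ≥ 1`.
-/

open Finset

def boundedTuples (n L : ℕ) : Finset (Fin n → ℕ) :=
  {a ∈ Fintype.piFinset fun _ => range (L + 1) | ∑ i, a i ≤ L}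

lemma mem_boundedTuples {n L : ℕ} {a : Fin n → ℕ} :
    a ∈ boundedTuples n L ↔ ∑ i, a i ≤ L := by
  simp only [boundedTuples, mem_filter, Fintype.mem_piFinset, mem_range, and_iff_right_iff_imp]
  exact fun h i =>
    Nat.lt_succ_of_le ((single_le_sum (fun i _ => Nat.zero_le _) (mem_univ i)).trans h)

lemma natCard_sum_le_eq_card_boundedTuples (n L : ℕ) :
    Nat.card {a : Fin n → ℕ // ∑ i, a i ≤ L} = #(boundedTuples n L) := by
  rw [← Nat.card_eq_finsetCard]
  exact Nat.card_congr (Equiv.subtypeEquivRight fun _ => mem_boundedTuples.symm)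

lemma card_boundedTuples_mul_pow_le {q : ℝ} (hq₀ : 0 ≤ q) (hq₁ : q < 1) (n L : ℕ) :
    #(boundedTuples n L) * q ^ L ≤ (1 - q)⁻¹ ^ n := by
  have hgeom : ∑ k ∈ range (L + 1), q ^ k ≤ (1 - q)⁻¹ := by
    simpa [one_div] using geom_sum_Ico_le_of_lt_one (m := 0) (n := L + 1) hq₀ hq₁
  calc (#(boundedTuples n L) : ℝ) * q ^ L = ∑ _a ∈ boundedTuples n L, q ^ L := by
        rw [sum_const, nsmul_eq_mul]
    _ ≤ ∑ a ∈ boundedTuples n L, q ^ (∑ i, a i) :=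
        sum_le_sum fun a ha => pow_le_pow_of_le_one hq₀ hq₁.le (mem_boundedTuples.mp ha)
    _ ≤ ∑ a ∈ Fintype.piFinset fun _ : Fin n => range (L + 1), ∏ i, q ^ a i := by
        simp_rw [prod_pow_eq_pow_sum]
        exact sum_le_sum_of_subset_of_nonneg (filter_subset _ _) fun _ _ _ => by positivity
    _ = ∏ _i : Fin n, ∑ k ∈ range (L + 1), q ^ k := (prod_univ_sum _ _).symm
    _ ≤ (1 - q)⁻¹ ^ n := by
        rw [prod_const, card_univ, Fintype.card_fin]
        exact pow_le_pow_left₀ (sum_nonneg fun _ _ => by positivity) hgeom n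

lemma card_boundedTuples_le {x : ℝ} (hx : 0 < x) (n L : ℕ) :
    #(boundedTuples n L) ≤ (x + 1) ^ n * (1 + 1 / x) ^ L := by
  have hq₀ : 0 < x / (x + 1) := by positivity
  have hq₁ : x / (x + 1) < 1 := by rw [div_lt_one (by positivity)]; linarith
  have hinv_sub : (1 - x / (x + 1))⁻¹ = x + 1 := by field_simp; ring
  have hinv : (x / (x + 1))⁻¹ = 1 + 1 / x := by field_simp
  have h := card_boundedTuples_mul_pow_le hq₀.le hq₁ n L
  rwa [hinv_sub, ← le_div_iff₀ (by positivity), div_eq_mul_inv, ← inv_pow, hinv] at h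

lemma two_rpow_g {x : ℝ} (hx : 0 < x) : (2 : ℝ) ^ g x = (x + 1) * (1 + 1 / x) ^ x := by
  have hx₁ : 0 < x + 1 := by linarith
  rw [g, Real.rpow_sub two_pos, mul_comm (x + 1), mul_comm x, Real.rpow_mul zero_le_two,
    Real.rpow_mul zero_le_two, Real.rpow_logb two_pos (by norm_num) hx₁,
    Real.rpow_logb two_pos (by norm_num) hx, Real.rpow_add_one hx₁.ne',
    show 1 + 1 / x = (x + 1) / x by field_simp, Real.div_rpow hx₁.le hx.le]
  field_simp

theorem stmt_5_general (N_S : ℝ) (hN : 0 < N_S) (n : ℕ) :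
    (Nat.card {a : Fin n → ℕ // (∑ i, a i) ≤ ⌈(n : ℝ) * N_S⌉₊} : ℝ)
      ≤ Real.exp 1 * (1 + 1 / N_S) * 2 ^ ((n : ℝ) * g N_S) := by
  set r := 1 + 1 / N_S
  have hr : 1 ≤ r := le_add_of_nonneg_right (by positivity)
  have hL : (⌈(n : ℝ) * N_S⌉₊ : ℝ) ≤ N_S * n + 1 := by
    rw [mul_comm N_S]; exact (Nat.ceil_lt_add_one (by positivity)).le
  rw [natCard_sum_le_eq_card_boundedTuples, mul_comm (n : ℝ) (g N_S), Real.rpow_mul zero_le_two,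
    two_rpow_g hN, Real.rpow_natCast, mul_pow, ← Real.rpow_mul_natCast (by positivity)]
  calc _ ≤ (N_S + 1) ^ n * r ^ ⌈(n : ℝ) * N_S⌉₊ := card_boundedTuples_le hN _ _
    _ ≤ (N_S + 1) ^ n * r ^ (N_S * n + 1) := by
        rw [← Real.rpow_natCast r]; gcongr
    _ = 1 * r * ((N_S + 1) ^ n * r ^ (N_S * n)) := by
        rw [Real.rpow_add_one (by positivity)]; ring
    _ ≤ Real.exp 1 * r * ((N_S + 1) ^ n * r ^ (N_S * n)) := by
        gcongr; exact Real.one_le_exp zero_le_one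

/-- The number of `n`-tuples of natural numbers with sum at most `⌈n·N_S⌉` (the rank of the
photon-number cutoff projector) is at most `e·(1 + 1/N_S)·2^(n·g(N_S))`. -/
theorem stmt_5 (N_S : ℝ) (hN : 0 < N_S) (n : ℕ) (hn : 1 ≤ n) :
    (Nat.card {a : Fin n → ℕ // (∑ i, a i) ≤ ⌈(n : ℝ) * N_S⌉₊} : ℝ)
      ≤ Real.exp 1 * (1 + 1 / N_S) * 2 ^ ((n : ℝ) * g N_S) :=
  stmt_5_general N_S hN n
end

section
/- Let T ∈ (0,1], μ ∈ (0,1), G = 1/(1−μ²), and let N_S > 0 and δ > 0 be real. Then for every ε > 0 there exists n₀ such that for all n ≥ n₀ and all n-tuples (a₁,…,aₙ) of natural numbers with a₁ + ⋯ + aₙ ≤ ⌈n·N_S⌉, the sum over all n-tuples (l₁,…,lₙ) of natural numbers with l₁ + ⋯ + lₙ ≤ ⌈n·(T·G·N_S + (G−1) + δ)⌉ of the product Π_{i=1}^n p_{T,μ}(l_i|a_i) is at least 1 − ε. (If the total input photon number is at most ⌈n·N_S⌉, then with probability tending to 1 the total output photon number over n independent channel uses is at most ⌈n·(T·G·N_S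 + (G−1) + δ)⌉.) -/
/-!
One use of the channel on `|k⟩` first thins `k` photons binomially with parameter `T`, and the
amplifier then adds a negative binomial number of photons: `q μ m` is the negative binomial law
with parameters `m + 1` and `μ²`, shifted by `m`. By the law of total variance the output photon
number has mean `T G k + (G - 1)` and variance `G (G - 1) (k T + 1) + G² k T (1 - T)`, which is at
most `G (2 G - 1) (k + 1)`. Over `n` independent uses means and variances add, so the total output
has mean at most `T G (n N_S + 1) + n (G - 1)` and variance `O(n)`, and Chebyshev's inequality
bounds the probability of exceeding that mean by `n δ / 2` by `O(1 / n)`.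
-/

/-- The photon-number distribution at the output of a quantum-limited amplifier channel of
gain `G = 1/(1−μ²)` applied to the Fock state `|m⟩`. -/
noncomputable def q (μ : ℝ) (m l : ℕ) : ℝ :=
  if m ≤ l then (1 - μ ^ 2) ^ (m + 1) * μ ^ (2 * (l - m)) * (l.choose (l - m)) else 0

/-- The photon-number distribution at the output of a phase-insensitive Gaussian channel
(pure-loss channel of transmissivity `T` followed by a quantum-limited amplifier of gain
`G = 1/(1−μ²)`) applied to the Fock state `|k⟩`. -/
noncomputable def pOut (T μ : ℝ) (k l : ℕ) : ℝ :=
  ∑ m ∈ Finset.range (k + 1), (k.choose m : ℝ) * T ^ m * (1 - T) ^ (k - m) * q μ m l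

open Finset

lemma HasSum.mul_of_real {α β : Type*} {f : α → ℝ} {g : β → ℝ} {s t : ℝ} (hf : HasSum f s)
    (hg : HasSum g t) : HasSum (fun z : α × β => f z.1 * g z.2) (s * t) :=
  hf.mul hg (summable_mul_of_summable_norm hf.summable.norm hg.summable.norm)

structure HasMeanVariance {α : Type*} (p X : α → ℝ) (m v : ℝ) : Prop where
  hasSum_one : HasSum p 1
  hasSum_mean : HasSum (fun a => X a * p a) m
  hasSum_sq : HasSum (fun a => X a ^ 2 * p a) (v + m ^ 2)

namespace HasMeanVariance

variable {α β : Type*} {p X : α → ℝ} {m v : ℝ}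

lemma hasSum_sub_sq (h : HasMeanVariance p X m v) :
    HasSum (fun a => (X a - m) ^ 2 * p a) v := by
  convert (h.hasSum_sq.add (h.hasSum_mean.mul_left (-2 * m))).add (h.hasSum_one.mul_left (m ^ 2))
    using 1
  · funext a
    ring
  · ring

lemma add_const (h : HasMeanVariance p X m v) (b : ℝ) :
    HasMeanVariance p (fun a => X a + b) (m + b) v where
  hasSum_one := h.hasSum_one
  hasSum_mean := by
    convert h.hasSum_mean.add (h.hasSum_one.mul_left b) using 1
    · funext a; ring
    · ring
  hasSum_sq := by
    convert (h.hasSum_sq.add (h.hasSum_mean.mul_left (2 * b))).add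
      (h.hasSum_one.mul_left (b ^ 2)) using 1
    · funext a; ring
    · ring

lemma of_comp_injective {g : β → α} (hg : Function.Injective g)
    (hp : ∀ a ∉ Set.range g, p a = 0) (h : HasMeanVariance (p ∘ g) (X ∘ g) m v) :
    HasMeanVariance p X m v where
  hasSum_one := (hg.hasSum_iff hp).mp h.hasSum_one
  hasSum_mean := (hg.hasSum_iff fun a ha => by simp [hp a ha]).mp h.hasSum_mean
  hasSum_sq := (hg.hasSum_iff fun a ha => by simp [hp a ha]).mp h.hasSum_sq

lemma comp_equiv (e : β ≃ α) (h : HasMeanVariance p X m v) :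
    HasMeanVariance (p ∘ e) (X ∘ e) m v :=
  ⟨e.hasSum_iff.mpr h.hasSum_one, e.hasSum_iff.mpr h.hasSum_mean, e.hasSum_iff.mpr h.hasSum_sq⟩

lemma prod {q Y : β → ℝ} {m' v' : ℝ} (h : HasMeanVariance p X m v)
    (h' : HasMeanVariance q Y m' v') :
    HasMeanVariance (fun z : α × β => p z.1 * q z.2) (fun z => X z.1 + Y z.2)
      (m + m') (v + v') where
  hasSum_one := by simpa using h.hasSum_one.mul_of_real h'.hasSum_one
  hasSum_mean := by
    convert (h.hasSum_mean.mul_of_real h'.hasSum_one).add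
      (h.hasSum_one.mul_of_real h'.hasSum_mean) using 1
    · funext z; ring
    · ring
  hasSum_sq := by
    convert ((h.hasSum_sq.mul_of_real h'.hasSum_one).add
      ((h.hasSum_mean.mul_of_real h'.hasSum_mean).mul_left 2)).add
      (h.hasSum_one.mul_of_real h'.hasSum_sq) using 1
    · funext z; ring
    · ring

lemma pi {n : ℕ} {p X : Fin n → α → ℝ} {m v : Fin n → ℝ}
    (h : ∀ i, HasMeanVariance (p i) (X i) (m i) (v i)) :
    HasMeanVariance (fun l : Fin n → α => ∏ i, p i (l i)) (fun l => ∑ i, X i (l i))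
      (∑ i, m i) (∑ i, v i) := by
  induction n with
  | zero =>
    refine ⟨?_, ?_, ?_⟩ <;> simp [hasSum_unique]
  | succ n ih =>
    have := ((h 0).prod (ih fun i => h i.succ)).comp_equiv (Fin.consEquiv fun _ => α).symm
    simpa [Fin.prod_univ_succ, Fin.sum_univ_succ, Function.comp_def, Fin.tail] using this

lemma sum_mixture {ι : Type*} {s : Finset ι} {w : ι → ℝ} {p : ι → α → ℝ} {m v : ι → ℝ}
    (hw : ∑ j ∈ s, w j = 1) (h : ∀ j ∈ s, HasMeanVariance (p j) X (m j) (v j)) :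
    HasMeanVariance (fun a => ∑ j ∈ s, w j * p j a) X (∑ j ∈ s, w j * m j)
      (∑ j ∈ s, w j * (v j + (m j - ∑ k ∈ s, w k * m k) ^ 2)) where
  hasSum_one := by
    simpa [hw] using hasSum_sum fun j hj => (h j hj).hasSum_one.mul_left (w j)
  hasSum_mean := by
    refine (hasSum_sum fun j hj => (h j hj).hasSum_mean.mul_left (w j)).congr_fun fun a => ?_
    rw [mul_sum]
    exact sum_congr rfl fun j _ => by ring
  hasSum_sq := by
    have hM : ∑ j ∈ s, w j * (v j + (m j - ∑ k ∈ s, w k * m k) ^ 2)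
        + (∑ k ∈ s, w k * m k) ^ 2 = ∑ j ∈ s, w j * (v j + m j ^ 2) := by
      have e : ∀ j ∈ s, w j * (v j + (m j - ∑ k ∈ s, w k * m k) ^ 2) = w j * (v j + m j ^ 2)
          - 2 * (∑ k ∈ s, w k * m k) * (w j * m j) + (∑ k ∈ s, w k * m k) ^ 2 * w j :=
        fun j _ => by ring
      rw [sum_congr rfl e, sum_add_distrib, sum_sub_distrib,
        ← mul_sum, ← mul_sum, hw]
      ring
    rw [hM]
    refine (hasSum_sum fun j hj => (h j hj).hasSum_sq.mul_left (w j)).congr_fun fun a => ?_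
    rw [mul_sum]
    exact sum_congr rfl fun j _ => by ring

lemma one_sub_div_sq_le_tsum_ite (h : HasMeanVariance p X m v) (hp : ∀ a, 0 ≤ p a)
    {P : α → Prop} [DecidablePred P] {t : ℝ} (ht : 0 < t) (hP : ∀ a, ¬ P a → m + t ≤ X a) :
    1 - v / t ^ 2 ≤ ∑' a, if P a then p a else 0 := by
  have hg : Summable fun a => if P a then 0 else p a :=
    h.hasSum_one.summable.of_nonneg_of_le (fun a => by split_ifs <;> simp [hp a])
      (fun a => by split_ifs <;> simp [hp a])
  have htail : ∑' a, (if P a then 0 else p a) ≤ v / t ^ 2 := by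
    refine hasSum_le (fun a => ?_) hg.hasSum (h.hasSum_sub_sq.div_const (t ^ 2))
    split_ifs with ha
    · exact div_nonneg (mul_nonneg (sq_nonneg _) (hp a)) (sq_nonneg _)
    · have : t ^ 2 ≤ (X a - m) ^ 2 := pow_le_pow_left₀ ht.le (by linarith [hP a ha]) 2
      rw [le_div_iff₀ (by positivity)]
      nlinarith [hp a]
  have hsplit : HasSum (fun a => if P a then p a else 0) (1 - ∑' a, if P a then 0 else p a) := by
    convert h.hasSum_one.add (hg.hasSum.mul_left (-1)) using 1
    · funext a; split_ifs <;> ring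
    · ring
  rw [hsplit.tsum_eq]
  linarith

end HasMeanVariance

lemma Nat.choose_mul_choose_add (j m r : ℕ) :
    j.choose r * (j + m).choose m = (m + r).choose r * (j + m).choose (m + r) := by
  have h := Nat.choose_mul (n := j + m) (Nat.le_add_right m r)
  rw [Nat.add_sub_cancel, Nat.add_sub_cancel_left, @Nat.choose_symm_add m r] at h
  rw [mul_comm (j.choose r), ← h, mul_comm]

noncomputable def negBinom (x : ℝ) (m j : ℕ) : ℝ := (1 - x) ^ (m + 1) * (j + m).choose m * x ^ j

lemma hasSum_choose_mul_negBinom {x : ℝ} (hx : |x| < 1) (m r : ℕ) :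
    HasSum (fun j => (j.choose r : ℝ) * negBinom x m j) ((m + r).choose r * (x / (1 - x)) ^ r) := by
  have hshift : HasSum (fun j : ℕ => ((j + m).choose (m + r) : ℝ) * x ^ j)
      (x ^ r / (1 - x) ^ (m + r + 1)) := by
    rw [← hasSum_nat_add_iff' r]
    have hlow : ∑ j ∈ range r, ((j + m).choose (m + r) : ℝ) * x ^ j = 0 :=
      sum_eq_zero fun j hj => by
        rw [Nat.choose_eq_zero_of_lt (by simp at hj; omega), Nat.cast_zero, zero_mul]
    rw [hlow, sub_zero, div_eq_mul_one_div, mul_comm]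
    refine ((hasSum_choose_mul_geometric_of_norm_lt_one (m + r)
      (by rwa [Real.norm_eq_abs])).mul_right (x ^ r)).congr_fun fun i => ?_
    rw [show i + r + m = i + (m + r) by ring, pow_add, mul_assoc]
  have hx1 : 1 - x ≠ 0 := by linarith [abs_lt.mp hx]
  rw [show (m + r).choose r * (x / (1 - x)) ^ r
      = (1 - x) ^ (m + 1) * (m + r).choose r * (x ^ r / (1 - x) ^ (m + r + 1)) by
    rw [div_pow, show m + r + 1 = (m + 1) + r by ring, pow_add (1 - x) (m + 1) r]
    field_simp]
  refine (hshift.mul_left _).congr_fun fun j => ?_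
  have h : (j.choose r : ℝ) * (j + m).choose m = (m + r).choose r * (j + m).choose (m + r) := by
    exact_mod_cast Nat.choose_mul_choose_add j m r
  simp only [negBinom]
  linear_combination (1 - x) ^ (m + 1) * x ^ j * h

lemma hasMeanVariance_negBinom {x : ℝ} (hx : |x| < 1) (m : ℕ) :
    HasMeanVariance (negBinom x m) (↑) ((m + 1) * (x / (1 - x))) ((m + 1) * (x / (1 - x) ^ 2)) := by
  have hx1 : 1 - x ≠ 0 := by linarith [abs_lt.mp hx]
  have h := hasSum_choose_mul_negBinom hx m
  refine ⟨by simpa using h 0, by simpa [add_comm] using h 1, ?_⟩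
  convert (h 1).add ((h 2).mul_left 2) using 1
  · funext j; simp only [Nat.cast_choose_two, Nat.choose_one_right]; ring
  · simp only [Nat.cast_choose_two, Nat.choose_one_right]; push_cast; field_simp; ring

lemma q_nonneg {μ : ℝ} (hμ : μ ^ 2 < 1) (m l : ℕ) : 0 ≤ q μ m l := by
  have : 0 ≤ 1 - μ ^ 2 := by linarith
  unfold q
  split_ifs
  · rw [pow_mul]; positivity
  · rfl

lemma q_add_eq_negBinom (μ : ℝ) (m j : ℕ) : q μ m (j + m) = negBinom (μ ^ 2) m j := by
  rw [q, if_pos (Nat.le_add_left m j), Nat.add_sub_cancel, negBinom, pow_mul, Nat.choose_symm_add]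
  ring

noncomputable def gain (μ : ℝ) : ℝ := 1 / (1 - μ ^ 2)

lemma hasMeanVariance_q {μ : ℝ} (hμ : μ ^ 2 < 1) (m : ℕ) :
    HasMeanVariance (q μ m) (↑) (gain μ * m + (gain μ - 1)) ((m + 1) * gain μ * (gain μ - 1)) := by
  refine .of_comp_injective (g := (· + m)) (add_left_injective m) (fun l hl => ?_) ?_
  · rw [q, if_neg fun h => hl ⟨l - m, Nat.sub_add_cancel h⟩]
  · have hx : |μ ^ 2| < 1 := by rwa [abs_of_nonneg (sq_nonneg μ)]
    have hx1 : 1 - μ ^ 2 ≠ 0 := by linarith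
    convert (hasMeanVariance_negBinom hx m).add_const (m : ℝ) using 1
    · funext j; exact q_add_eq_negBinom μ m j
    · funext j; simp
    · simp only [gain]; field_simp; ring
    · simp only [gain]; field_simp; ring

namespace bernsteinPolynomial

open Polynomial

variable (k : ℕ) (T : ℝ)

lemma sum_eval : ∑ m ∈ range (k + 1), (bernsteinPolynomial ℝ k m).eval T = 1 := by
  simpa [eval_finsetSum] using congrArg (eval T) (bernsteinPolynomial.sum ℝ k)

lemma sum_mul_eval :
    ∑ m ∈ range (k + 1), (m : ℝ) * (bernsteinPolynomial ℝ k m).eval T = k * T := by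
  simpa [eval_finsetSum] using congrArg (eval T) (bernsteinPolynomial.sum_smul ℝ k)

lemma sum_sub_sq_mul_eval :
    ∑ m ∈ range (k + 1), (k * T - m) ^ 2 * (bernsteinPolynomial ℝ k m).eval T
      = k * T * (1 - T) := by
  simpa [eval_finsetSum] using congrArg (eval T) (bernsteinPolynomial.variance ℝ k)

lemma eval_nonneg {m : ℕ} (hT : T ∈ Set.Icc (0 : ℝ) 1) :
    0 ≤ (bernsteinPolynomial ℝ k m).eval T := by
  have := sub_nonneg.mpr hT.2
  simp only [bernsteinPolynomial, eval_mul, eval_pow, eval_sub, eval_one, eval_X, eval_natCast]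
  exact mul_nonneg (mul_nonneg (Nat.cast_nonneg _) (pow_nonneg hT.1 _)) (pow_nonneg this _)

end bernsteinPolynomial

lemma pOut_eq_sum_bernstein (T μ : ℝ) (k : ℕ) :
    pOut T μ k = fun l => ∑ m ∈ range (k + 1), (bernsteinPolynomial ℝ k m).eval T * q μ m l := by
  funext l
  simp [pOut, bernsteinPolynomial]

lemma pOut_nonneg {T μ : ℝ} (hT : T ∈ Set.Icc (0 : ℝ) 1) (hμ : μ ^ 2 < 1) (k l : ℕ) :
    0 ≤ pOut T μ k l := by
  rw [pOut_eq_sum_bernstein]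
  exact sum_nonneg fun m _ =>
    mul_nonneg (bernsteinPolynomial.eval_nonneg k T hT) (q_nonneg hμ m l)

lemma hasMeanVariance_pOut (T : ℝ) {μ : ℝ} (hμ : μ ^ 2 < 1) (k : ℕ) :
    HasMeanVariance (pOut T μ k) (↑) (T * gain μ * k + (gain μ - 1))
      (gain μ * (gain μ - 1) * (k * T + 1) + gain μ ^ 2 * (k * T * (1 - T))) := by
  set G := gain μ
  have hmean : ∑ m ∈ range (k + 1), (bernsteinPolynomial ℝ k m).eval T * (G * m + (G - 1))
      = T * G * k + (G - 1) := by
    have e : ∀ m ∈ range (k + 1), (bernsteinPolynomial ℝ k m).eval T * (G * m + (G - 1))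
        = G * (m * (bernsteinPolynomial ℝ k m).eval T)
          + (G - 1) * (bernsteinPolynomial ℝ k m).eval T :=
      fun m _ => by ring
    rw [sum_congr rfl e, sum_add_distrib, ← mul_sum, ← mul_sum,
      bernsteinPolynomial.sum_mul_eval, bernsteinPolynomial.sum_eval]
    ring
  have h := HasMeanVariance.sum_mixture (bernsteinPolynomial.sum_eval k T)
    fun m _ => hasMeanVariance_q hμ m
  rw [← pOut_eq_sum_bernstein, hmean] at h
  convert h using 1
  have e : ∀ m ∈ range (k + 1), (bernsteinPolynomial ℝ k m).eval T
      * ((m + 1) * G * (G - 1) + (G * m + (G - 1) - (T * G * k + (G - 1))) ^ 2)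
      = G * (G - 1) * (m * (bernsteinPolynomial ℝ k m).eval T)
        + G * (G - 1) * (bernsteinPolynomial ℝ k m).eval T
        + G ^ 2 * ((k * T - m) ^ 2 * (bernsteinPolynomial ℝ k m).eval T) :=
    fun m _ => by ring
  rw [sum_congr rfl e, sum_add_distrib, sum_add_distrib, ← mul_sum,
    ← mul_sum, ← mul_sum, bernsteinPolynomial.sum_mul_eval,
    bernsteinPolynomial.sum_eval, bernsteinPolynomial.sum_sub_sq_mul_eval]
  ring

lemma one_le_gain {μ : ℝ} (hμ : μ ^ 2 < 1) : 1 ≤ gain μ := by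
  rw [gain, le_div_iff₀ (by linarith)]
  nlinarith

lemma variance_pOut_le {G T : ℝ} (hG : 1 ≤ G) (hT : T ∈ Set.Icc (0 : ℝ) 1) {k : ℝ} (hk : 0 ≤ k) :
    G * (G - 1) * (k * T + 1) + G ^ 2 * (k * T * (1 - T)) ≤ G * (2 * G - 1) * (k + 1) := by
  have hkT : k * T ≤ k := mul_le_of_le_one_right hk hT.2
  have hkT' : k * T * (1 - T) ≤ k :=
    (mul_le_of_le_one_right (mul_nonneg hk hT.1) (by linarith [hT.1])).trans hkT
  nlinarith [mul_le_mul_of_nonneg_left hkT (by nlinarith : 0 ≤ G * (G - 1)),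
    mul_le_mul_of_nonneg_left hkT' (sq_nonneg G)]

lemma one_sub_le_tsum_ite_prod_pOut {T μ : ℝ} (hT : T ∈ Set.Icc (0 : ℝ) 1) (hμ : μ ^ 2 < 1)
    {n : ℕ} (a : Fin n → ℕ) (L : ℕ) {t : ℝ} (ht : 0 < t)
    (hL : T * gain μ * ∑ i, (a i : ℝ) + n * (gain μ - 1) + t ≤ L + 1) :
    1 - gain μ * (2 * gain μ - 1) * (∑ i, (a i : ℝ) + n) / t ^ 2
      ≤ ∑' l : Fin n → ℕ, if ∑ i, l i ≤ L then ∏ i, pOut T μ (a i) (l i) else 0 := by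
  set G := gain μ
  have h := HasMeanVariance.pi fun i => hasMeanVariance_pOut T hμ (a i)
  have hv : ∑ i, (G * (G - 1) * (a i * T + 1) + G ^ 2 * (a i * T * (1 - T)))
      ≤ G * (2 * G - 1) * (∑ i, (a i : ℝ) + n) := calc
    _ ≤ ∑ i, G * (2 * G - 1) * ((a i : ℝ) + 1) :=
      sum_le_sum fun i _ => variance_pOut_le (one_le_gain hμ) hT (Nat.cast_nonneg _)
    _ = G * (2 * G - 1) * (∑ i, (a i : ℝ) + n) := by
      rw [← mul_sum, sum_add_distrib, sum_const, card_univ, Fintype.card_fin, nsmul_one]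
  have hm : ∑ i, (T * G * a i + (G - 1)) = T * G * ∑ i, (a i : ℝ) + n * (G - 1) := by
    rw [sum_add_distrib, ← mul_sum, sum_const, card_univ, Fintype.card_fin, nsmul_eq_mul]
  refine le_trans ?_ (h.one_sub_div_sq_le_tsum_ite
    (fun l => prod_nonneg fun i _ => pOut_nonneg hT hμ _ _) ht fun l hl => ?_)
  · gcongr
  · have : (L : ℝ) + 1 ≤ ∑ i, (l i : ℝ) := by exact_mod_cast Nat.succ_le_of_lt (not_le.mp hl)
    linarith

open Filter in
/-- If the total input photon number is at most `⌈n·N_S⌉`, then with probability tending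
to `1` (as `n → ∞`, uniformly over such inputs), the total output photon number over `n`
independent uses of a phase-insensitive channel is at most
`⌈n·(T·G·N_S + (G−1) + δ)⌉` where `G = 1/(1−μ²)`. -/
theorem stmt_13 (T μ : ℝ) (hT : T ∈ Set.Ioc (0 : ℝ) 1) (hμ : μ ∈ Set.Ioo (0 : ℝ) 1)
    (N_S δ : ℝ) (hNS : 0 < N_S) (hδ : 0 < δ) :
    ∀ ε > 0, ∃ n₀ : ℕ, ∀ n ≥ n₀, ∀ a : Fin n → ℕ,
      (∑ i, a i) ≤ ⌈(n : ℝ) * N_S⌉₊ →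
      1 - ε ≤ ∑' l : Fin n → ℕ,
        (if (∑ i, l i) ≤
            ⌈(n : ℝ) * (T * (1 / (1 - μ ^ 2)) * N_S + (1 / (1 - μ ^ 2) - 1) + δ)⌉₊
          then ∏ i, pOut T μ (a i) (l i) else 0) := by
  intro ε hε
  have hT' : T ∈ Set.Icc (0 : ℝ) 1 := Set.Ioc_subset_Icc_self hT
  have hμ2 : μ ^ 2 < 1 := pow_lt_one₀ hμ.1.le hμ.2 two_ne_zero
  rw [show 1 / (1 - μ ^ 2) = gain μ from rfl]
  set G := gain μ
  set B := G * (2 * G - 1)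
  obtain ⟨n₀, hn₀⟩ := eventually_atTop.mp <| (eventually_ge_atTop 1).and <|
    (tendsto_natCast_atTop_atTop.eventually_ge_atTop (2 * T * G / δ)).and <|
    (tendsto_const_div_atTop_nhds_zero_nat (4 * B * (N_S + 2) / δ ^ 2)).eventually (gt_mem_nhds hε)
  refine ⟨n₀, fun n hn a ha => ?_⟩
  obtain ⟨hn1, hnT, hnε⟩ := hn₀ n hn
  have hn1' : (1 : ℝ) ≤ n := by exact_mod_cast hn1
  have hA : ∑ i, (a i : ℝ) ≤ n * N_S + 1 := by
    have := Nat.ceil_lt_add_one (by positivity : 0 ≤ (n : ℝ) * N_S)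
    exact_mod_cast (Nat.cast_le.mpr ha).trans this.le
  refine le_trans ?_ (one_sub_le_tsum_ite_prod_pOut hT' hμ2 a _ (t := n * δ / 2) (by positivity) ?_)
  · have hB : 0 ≤ B := mul_nonneg (by linarith [one_le_gain hμ2]) (by linarith [one_le_gain hμ2])
    have : B * (∑ i, (a i : ℝ) + n) / (n * δ / 2) ^ 2 ≤ 4 * B * (N_S + 2) / δ ^ 2 / n := calc
      _ ≤ B * (n * (N_S + 2)) / (n * δ / 2) ^ 2 := by gcongr; nlinarith
      _ = 4 * B * (N_S + 2) / δ ^ 2 / n := by field_simp; ring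
    linarith
  · have hL := Nat.le_ceil ((n : ℝ) * (T * G * N_S + (G - 1) + δ))
    have hTG : T * G * ∑ i, (a i : ℝ) ≤ T * G * (n * N_S + 1) :=
      mul_le_mul_of_nonneg_left hA (mul_nonneg hT'.1 (by linarith [one_le_gain hμ2]))
    have hnT' : 2 * T * G ≤ n * δ := (div_le_iff₀ hδ).mp hnT
    nlinarith
end

section
/- Let X be a countable type, let p : X → ℝ be a probability mass function (p(x) ≥ 0 for all x and Σ_x p(x) = 1), let α > 1 and ε ∈ (0,1), and set H_α(p) = (1/(1−α))·log₂(Σ_x p(x)^α). Then there exists p̃ : X → ℝ with 0 ≤ p̃(x) ≤ p(x) for all x, Σ_x (p(x) − p̃(x)) ≤ ε, and p̃(x) ≤ 2^(−H_α(p))·(1/ε)^(1/(α−1)) for all x. (Classical form of the inequality H_min^ε(p) ≥ H_α(p) − (1/(α−1))·log₂(1/ε) relating smooth min-entropy and Rényi entropy.) -/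
/-!
Truncate `p` at the level `L = (S / ε)^(1/(α-1))`, where `S = ∑ p^α`, keeping `p x` when
`p x ≤ L` and discarding it otherwise. A discarded value satisfies `p x ≤ p x^α / L^(α-1)`
(Chebyshev's trick), so the discarded mass is at most `S / L^(α-1) = ε`, while the kept values
are bounded by `L`, which is exactly `2^(-H_α(p)) (1/ε)^(1/(α-1))`.
-/

open Set

lemma summable_rpow_of_le_one {X : Type*} {p : X → ℝ} (hp : Summable p) (hp0 : ∀ x, 0 ≤ p x)
    (hp1 : ∀ x, p x ≤ 1) {α : ℝ} (hα : 1 ≤ α) : Summable (fun x => p x ^ α) :=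
  hp.of_nonneg_of_le (fun x => Real.rpow_nonneg (hp0 x) α)
    (fun x => Real.rpow_le_self_of_le_one (hp0 x) (hp1 x) hα)

lemma exists_pos_of_hasSum_one {X : Type*} {p : X → ℝ} (hp0 : ∀ x, 0 ≤ p x)
    (hp1 : HasSum p 1) : ∃ x, 0 < p x := by
  by_contra! h
  have hp : p = 0 := funext fun x => le_antisymm (h x) (hp0 x)
  exact one_ne_zero (hp1.unique (hp ▸ hasSum_zero))

lemma le_rpow_div_rpow_sub_one {t L α : ℝ} (hL : 0 < L) (hLt : L < t) (hα : 1 ≤ α) :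
    t ≤ t ^ α / L ^ (α - 1) := by
  have ht : 0 < t := hL.trans hLt
  rw [le_div_iff₀ (Real.rpow_pos_of_pos hL _)]
  calc t * L ^ (α - 1) ≤ t * t ^ (α - 1) := by gcongr
    _ = t ^ α := by rw [← Real.rpow_one_add' ht.le (by linarith), add_sub_cancel]

lemma tsum_indicator_lt_le {X : Type*} {f : X → ℝ} (hf0 : ∀ x, 0 ≤ f x)
    {α : ℝ} (hfα : Summable (fun x => f x ^ α)) (hα : 1 ≤ α) {L : ℝ} (hL : 0 < L) :
    ∑' x, {x | L < f x}.indicator f x ≤ (∑' x, f x ^ α) / L ^ (α - 1) := by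
  have hle : ∀ x, {x | L < f x}.indicator f x ≤ f x ^ α / L ^ (α - 1) := fun x =>
    indicator_apply_le' (fun hx => le_rpow_div_rpow_sub_one hL hx hα)
      (fun _ => div_nonneg (Real.rpow_nonneg (hf0 x) _) (Real.rpow_nonneg hL.le _))
  have hbound : Summable (fun x => f x ^ α / L ^ (α - 1)) := hfα.div_const _
  have hind : Summable (fun x => {x | L < f x}.indicator f x) :=
    hbound.of_nonneg_of_le (fun x => indicator_nonneg (fun x _ => hf0 x) x) hle
  rw [← tsum_div_const]
  exact hind.tsum_le_tsum hle hbound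

lemma two_rpow_neg_mul_logb_mul_rpow {S α ε : ℝ} (hS : 0 < S) (hα : α ≠ 1) (hε : 0 < ε) :
    (2 : ℝ) ^ (-((1 / (1 - α)) * Real.logb 2 S)) * (1 / ε) ^ (1 / (α - 1))
      = (S / ε) ^ (1 / (α - 1)) := by
  have hexp : -((1 / (1 - α)) * Real.logb 2 S) = Real.logb 2 S * (1 / (α - 1)) := by
    have : (1 : ℝ) - α ≠ 0 := sub_ne_zero.mpr hα.symm
    have : α - 1 ≠ 0 := sub_ne_zero.mpr hα
    field_simp
    ring
  rw [hexp, Real.rpow_mul zero_le_two, Real.rpow_logb zero_lt_two one_lt_two.ne' hS,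
    ← Real.mul_rpow hS.le (by positivity), mul_one_div]

theorem stmt_14_general {X : Type*} (p : X → ℝ)
    (hp0 : ∀ x, 0 ≤ p x) (hp1 : HasSum p 1)
    (α : ℝ) (hα : 1 < α) (ε : ℝ) (hε : ε ∈ Set.Ioo (0 : ℝ) 1) :
    ∃ pt : X → ℝ,
      (∀ x, 0 ≤ pt x ∧ pt x ≤ p x) ∧
      (∑' x, (p x - pt x)) ≤ ε ∧
      ∀ x, pt x ≤
        (2 : ℝ) ^ (-((1 / (1 - α)) * Real.logb 2 (∑' y, p y ^ α)))
          * (1 / ε) ^ (1 / (α - 1)) := by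
  obtain ⟨hε0, -⟩ := hε
  have hSum : Summable (fun x => p x ^ α) :=
    summable_rpow_of_le_one hp1.summable hp0 (fun x => le_hasSum hp1 x fun y _ => hp0 y) hα.le
  set S := ∑' y, p y ^ α
  have hS : 0 < S := by
    obtain ⟨x, hx⟩ := exists_pos_of_hasSum_one hp0 hp1
    exact hSum.tsum_pos (fun y => Real.rpow_nonneg (hp0 y) α) x (Real.rpow_pos_of_pos hx α)
  set L := (S / ε) ^ (1 / (α - 1))
  have hL : 0 < L := by positivity
  have hLpow : L ^ (α - 1) = S / ε := by
    rw [← Real.rpow_mul (by positivity), one_div_mul_cancel (by linarith), Real.rpow_one]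
  refine ⟨{x | p x ≤ L}.indicator p, fun x => ⟨indicator_nonneg (fun y _ => hp0 y) x,
    indicator_apply_le' (fun _ => le_rfl) (fun _ => hp0 x)⟩, ?_, fun x => ?_⟩
  · calc ∑' x, (p x - {x | p x ≤ L}.indicator p x)
        = ∑' x, {x | L < p x}.indicator p x := by
          simp only [← Pi.sub_apply, ← indicator_compl, compl_ofPred, not_le]
      _ ≤ S / L ^ (α - 1) := tsum_indicator_lt_le hp0 hSum hα.le hL
      _ = ε := by rw [hLpow]; field_simp
  · rw [two_rpow_neg_mul_logb_mul_rpow hS hα.ne' hε0]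
    exact indicator_apply_le' id (fun _ => hL.le)

/-- Classical form of the inequality `H_min^ε(p) ≥ H_α(p) − (1/(α−1))·log₂(1/ε)` relating
the smooth min-entropy and the Rényi entropy of order `α > 1`: there is a subnormalized
distribution `p̃ ≤ p` that is `ε`-close to `p` in `ℓ¹` distance and satisfies
`p̃(x) ≤ 2^(−H_α(p))·(1/ε)^(1/(α−1))` for every `x`. -/
theorem stmt_14 {X : Type*} [Countable X] (p : X → ℝ)
    (hp0 : ∀ x, 0 ≤ p x) (hp1 : HasSum p 1)
    (α : ℝ) (hα : 1 < α) (ε : ℝ) (hε : ε ∈ Set.Ioo (0 : ℝ) 1) :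
    ∃ pt : X → ℝ,
      (∀ x, 0 ≤ pt x ∧ pt x ≤ p x) ∧
      (∑' x, (p x - pt x)) ≤ ε ∧
      ∀ x, pt x ≤
        (2 : ℝ) ^ (-((1 / (1 - α)) * Real.logb 2 (∑' y, p y ^ α)))
          * (1 / ε) ^ (1 / (α - 1)) :=
  stmt_14_general p hp0 hp1 α hα ε hε
end

section
/- For every real N > 0 there exists α₀ > 1 such that for all α ∈ (1, α₀): log₂((N+1)^α − N^α)/(α−1) ≥ g(N) − 4·(α−1)·(log₂ v(N))², where v(N) = ((N+1)^(3/2) − N^(3/2))² + ((N+1)^(1/2) − N^(1/2))^(−2) + 1. That is, for α sufficiently close to 1, the order-α Rényi entropy of the thermal distribution with mean N is at least its Shannon entropy g(N) minus (α−1)·K(N) with K(N) = 4·(log₂ v(N))². -/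
/-- `v(N) = ((N+1)^{3/2} − N^{3/2})² + ((N+1)^{1/2} − N^{1/2})^{−2} + 1`. -/
noncomputable def v (N : ℝ) : ℝ :=
  ((N + 1) ^ ((3 : ℝ) / 2) - N ^ ((3 : ℝ) / 2)) ^ 2
    + ((N + 1) ^ ((1 : ℝ) / 2) - N ^ ((1 : ℝ) / 2)) ^ (-2 : ℤ) + 1

/-! With `f α = log₂ ((N+1)^α − N^α)` we have `f 1 = 0` and `f' 1 = g N`, so the claim is the
second-order lower bound `f α ≥ (α−1) g(N) − K (α−1)²` near `α = 1`, with `K = 4 (log₂ v)²`.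
By the second-derivative test this holds once `2K > −f''(1) = N(N+1) (ln(N+1) − ln N)² / ln 2`.
The geometric–logarithmic mean inequality `√(ab) · (ln b − ln a) ≤ b − a` bounds the right side
by `1 / ln 2 < 2`, while `v N ≥ 2` gives `2K ≥ 8`. -/

open Real Filter Topology

theorem eventually_tangent_sub_sq_le {f : ℝ → ℝ} {a D K : ℝ}
    (hf : ∀ᶠ x in 𝓝 a, DifferentiableAt ℝ f x) (hf' : HasDerivAt (deriv f) D a)
    (hK : -D < 2 * K) :
    ∀ᶠ x in 𝓝 a, f a + deriv f a * (x - a) - K * (x - a) ^ 2 ≤ f x := by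
  set ψ := fun x => f x - (f a + deriv f a * (x - a) - K * (x - a) ^ 2)
  have hψ' : deriv ψ =ᶠ[𝓝 a] fun x => deriv f x - deriv f a + 2 * K * (x - a) := by
    filter_upwards [hf] with x hx
    refine (hx.hasDerivAt.sub (((((hasDerivAt_id x).sub_const a).const_mul (deriv f a)).const_add
      (f a)).sub (((hasDerivAt_id x).sub_const a).pow 2 |>.const_mul K))).deriv.trans ?_
    simp only [id, Nat.cast_ofNat]
    ring
  have hψ'' : HasDerivAt (deriv ψ) (D + 2 * K) a := by
    refine HasDerivAt.congr_of_eventuallyEq ?_ hψ'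
    simpa using (hf'.sub_const (deriv f a)).fun_add
      (((hasDerivAt_id a).sub_const a).const_mul (2 * K))
  have hmin : IsLocalMin ψ a := by
    refine isLocalMin_of_deriv_deriv_pos (by rw [hψ''.deriv]; linarith) (by simp [hψ'.eq_of_nhds])
      (hf.self_of_nhds.continuousAt.sub (by fun_prop))
  have hψa : ψ a = 0 := by simp [ψ]
  filter_upwards [hmin] with x hx
  rwa [hψa, sub_nonneg] at hx

theorem sq_le_sinh_sq (x : ℝ) : x ^ 2 ≤ sinh x ^ 2 := by
  rcases le_total 0 x with hx | hx
  · exact pow_le_pow_left₀ hx (self_le_sinh_iff.mpr hx) 2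
  · nlinarith [sinh_le_self_iff.mpr hx]

theorem mul_mul_sq_log_sub_log_le {a b : ℝ} (ha : 0 < a) (hb : 0 < b) :
    a * b * (log b - log a) ^ 2 ≤ (b - a) ^ 2 := by
  set x := log b - log a
  have hsq : exp (x / 2) ^ 2 = b / a := by
    rw [sq, ← exp_add, add_halves, exp_sub, exp_log hb, exp_log ha]
  have hsinh : 4 * a * b * sinh (x / 2) ^ 2 = (b - a) ^ 2 := by
    rw [sinh_eq, exp_neg]
    have := exp_pos (x / 2)
    field_simp
    rw [hsq]
    field_simp
    ring
  calc a * b * x ^ 2 = 4 * a * b * (x / 2) ^ 2 := by ring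
    _ ≤ 4 * a * b * sinh (x / 2) ^ 2 := by gcongr ?_ * ?_; exact sq_le_sinh_sq _
    _ = (b - a) ^ 2 := hsinh

theorem two_le_v {N : ℝ} (hN : 0 < N) : 2 ≤ v N := by
  have hB : 0 < √(N + 1) - √N := sub_pos.mpr (sqrt_lt_sqrt hN.le (lt_add_one N))
  have hB1 : √(N + 1) - √N ≤ 1 := by
    rw [sub_le_iff_le_add, sqrt_le_left (by positivity)]
    nlinarith [sq_sqrt hN.le, sqrt_nonneg N]
  have hinv : 1 ≤ (√(N + 1) - √N) ^ (-2 : ℤ) := by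
    rw [zpow_neg, zpow_two]
    exact one_le_inv₀ (by positivity) |>.mpr (by nlinarith)
  rw [v, ← sqrt_eq_rpow, ← sqrt_eq_rpow]
  nlinarith [sq_nonneg ((N + 1) ^ ((3 : ℝ) / 2) - N ^ ((3 : ℝ) / 2))]

theorem hasDerivAt_rpow_sub_rpow {a b : ℝ} (ha : 0 < a) (hb : 0 < b) (x : ℝ) :
    HasDerivAt (fun x => a ^ x - b ^ x) (a ^ x * log a - b ^ x * log b) x :=
  (hasStrictDerivAt_const_rpow ha x).hasDerivAt.sub (hasStrictDerivAt_const_rpow hb x).hasDerivAt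

theorem hasDerivAt_logb_rpow_sub_rpow {a b x : ℝ} (hb : 0 < b) (hba : b < a) (hx : 0 < x) :
    HasDerivAt (fun x => logb 2 (a ^ x - b ^ x))
      ((a ^ x * log a - b ^ x * log b) / ((a ^ x - b ^ x) * log 2)) x := by
  have hpos : 0 < a ^ x - b ^ x := sub_pos.mpr (rpow_lt_rpow hb.le hba hx)
  simp only [logb]
  simpa only [div_div] using
    ((hasDerivAt_rpow_sub_rpow (hb.trans hba) hb x).log hpos.ne').div_const (log 2)

theorem hasDerivAt_deriv_logb_rpow_sub_rpow_one {a b : ℝ} (hb : 0 < b) (hba : b < a) :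
    HasDerivAt (deriv fun x : ℝ => logb 2 (a ^ x - b ^ x))
      (-(a * b * (log a - log b) ^ 2) / ((a - b) ^ 2 * log 2)) 1 := by
  have ha := hb.trans hba
  have hnum := ((hasStrictDerivAt_const_rpow ha (1 : ℝ)).hasDerivAt.mul_const (log a)).fun_sub
    ((hasStrictDerivAt_const_rpow hb (1 : ℝ)).hasDerivAt.mul_const (log b))
  have hden := (hasDerivAt_rpow_sub_rpow ha hb 1).mul_const (log 2)
  have hden1 : (a ^ (1 : ℝ) - b ^ (1 : ℝ)) * log 2 ≠ 0 := by
    rw [rpow_one, rpow_one]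
    exact mul_ne_zero (sub_ne_zero.mpr hba.ne') (by positivity)
  refine ((hnum.fun_div hden hden1).congr_deriv ?_).congr_of_eventuallyEq
    ((lt_mem_nhds one_pos).mono fun x hx => (hasDerivAt_logb_rpow_sub_rpow hb hba hx).deriv)
  have hab : a - b ≠ 0 := sub_ne_zero.mpr hba.ne'
  -- the quotient rule numerator collapses: `(a L² − b M²)(a − b) − (a L − b M)² = −ab (L − M)²`
  simp only [rpow_one]
  field_simp
  ring

/-- For `α` sufficiently close to `1`, the order-`α` Rényi entropy of the thermal
distribution with mean `N` is at least `g(N) − 4(α−1)(log₂ v(N))²`. -/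
theorem stmt_16 (N : ℝ) (hN : 0 < N) :
    ∃ α₀ : ℝ, 1 < α₀ ∧ ∀ α ∈ Set.Ioo (1 : ℝ) α₀,
      Real.logb 2 ((N + 1) ^ α - N ^ α) / (α - 1)
        ≥ g N - 4 * (α - 1) * (Real.logb 2 (v N)) ^ 2 := by
  set f := fun α : ℝ => logb 2 ((N + 1) ^ α - N ^ α)
  have hfd : ∀ᶠ α in 𝓝 1, HasDerivAt f
      (((N + 1) ^ α * log (N + 1) - N ^ α * log N) / (((N + 1) ^ α - N ^ α) * log 2)) α :=
    (lt_mem_nhds one_pos).mono fun α hα => hasDerivAt_logb_rpow_sub_rpow hN (lt_add_one N) hα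
  have hf1 : f 1 = 0 := by simp [f]
  have hf'1 : deriv f 1 = g N := by
    rw [hfd.self_of_nhds.deriv, g]
    simp only [rpow_one, add_sub_cancel_left, one_mul, logb]
    ring
  have hf'' := hasDerivAt_deriv_logb_rpow_sub_rpow_one hN (lt_add_one N)
  rw [add_sub_cancel_left, one_pow, one_mul] at hf''
  have hK : (N + 1) * N * (log (N + 1) - log N) ^ 2 / log 2 < 2 * (4 * logb 2 (v N) ^ 2) := by
    have hlog : 1 ≤ logb 2 (v N) := by
      simpa using logb_le_logb_of_le one_lt_two (by norm_num) (two_le_v hN)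
    have hmean := mul_mul_sq_log_sub_log_le hN (by linarith : 0 < N + 1)
    rw [add_sub_cancel_left, one_pow] at hmean
    have hlog2 : 1 / 2 < log 2 := by linarith [log_two_gt_d9]
    rw [div_lt_iff₀ (by linarith)]
    nlinarith
  have hlower := eventually_tangent_sub_sq_le (hfd.mono fun _ h => h.differentiableAt) hf''
    (by rwa [neg_div, neg_neg])
  obtain ⟨α₀, hα₀, hsub⟩ := mem_nhdsGT_iff_exists_Ioo_subset.mp (nhdsWithin_le_nhds hlower)
  refine ⟨α₀, hα₀, fun α hα => ?_⟩
  have hbound : _ ≤ f α := hsub hα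
  rw [hf1, hf'1, zero_add] at hbound
  rw [ge_iff_le, le_div_iff₀ (sub_pos.mpr hα.1)]
  linarith
end
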